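/- arXiv:2007.08023 — 5 statements merged into one kernel-verified Lean document; each statement's English description precedes it below -/
import Mathlib

section
/- If H is a spanning subgraph of a graph G, then the characteristic polynomial of H is at least that of G for all x ≥ ρ(G): P_G(x) ≤ P_H(x) for all x ≥ ρ(G). -/
open scoped Classical
open Polynomial

noncomputable section

def adjM {V : Type*} [Fintype V] (G : SimpleGraph V) : Matrix V V ℝ :=
  fun a b => if G.Adj a b then 1 else 0

def charP {V : Type*} [Fintype V] [DecidableEq V] (G : SimpleGraph V) : Polynomial ℝ :=
  (adjM G).charpoly

/-- The largest real root of the characteristic polynomial, which for the symmetric matrix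
`adjM G` is its largest eigenvalue. -/
def specRad {V : Type*} [Fintype V] [DecidableEq V] (G : SimpleGraph V) : ℝ :=
  sSup {x : ℝ | (charP G).IsRoot x}

/-!
Write `A = A(G)` and `B = A(H)`, so that `|B| ≤ A` entrywise. For `x ≥ ρ(G)` the matrix `xI - A`
is positive semidefinite, and comparing quadratic forms at `|v|` shows that so is `xI - B`; both
properties pass to principal submatrices. Induct on the size: at `x₀ = λ_max(A)` we have
`P_A(x₀) = 0 ≤ det (x₀I - B) = P_B(x₀)`, and for `y ≥ x₀` the derivative of `P_B - P_A` is
`∑ᵢ (P_{Bᵢ} - P_{Aᵢ})(y) ≥ 0` by induction, where `Aᵢ`, `Bᵢ` delete row and column `i`.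
-/

theorem Polynomial.eval_le_eval_of_derivative_le {p q : ℝ[X]} {a x : ℝ}
    (ha : p.eval a ≤ q.eval a) (hd : ∀ y, a < y → p.derivative.eval y ≤ q.derivative.eval y)
    (hx : a ≤ x) : p.eval x ≤ q.eval x := by
  have hmono : MonotoneOn (fun y => (q - p).eval y) (Set.Ici a) := by
    refine monotoneOn_of_deriv_nonneg (convex_Ici a) (q - p).continuous.continuousOn
      (q - p).differentiable.differentiableOn fun y hy => ?_
    rw [interior_Ici] at hy
    rw [Polynomial.deriv, derivative_sub, eval_sub, sub_nonneg]
    exact hd y hy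
  have := hmono Set.self_mem_Ici hx hx
  simp only [eval_sub] at this
  linarith

namespace Matrix

section CommRing

variable {R : Type*} [CommRing R] {n : Type*} [Fintype n] [DecidableEq n]

theorem derivative_det (M : Matrix n n R[X]) :
    derivative M.det = ∑ i, (M.updateCol i fun k => derivative (M k i)).det := by
  have hprod (σ : Equiv.Perm n) (i : n) :
      ∏ j, (M.updateCol i fun k => derivative (M k i)) (σ j) j
        = (∏ j ∈ Finset.univ.erase i, M (σ j) j) * derivative (M (σ i) i) := by
    rw [← Finset.mul_prod_erase _ _ (Finset.mem_univ i), mul_comm]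
    congr 1
    · exact Finset.prod_congr rfl fun j hj => by simp [Finset.ne_of_mem_erase hj]
    · simp
  simp only [det_apply, hprod, map_sum, Units.smul_def, map_zsmul, derivative_prod_finset,
    Finset.smul_sum]
  exact Finset.sum_comm

theorem charmatrix_submatrix {l : Type*} [Fintype l] [DecidableEq l] (M : Matrix n n R)
    {e : l → n} (he : Function.Injective e) :
    charmatrix (M.submatrix e e) = (charmatrix M).submatrix e e := by
  ext i j
  rcases eq_or_ne i j with rfl | h
  · simp
  · simp [h, he.ne h]

theorem derivative_charpoly {m : ℕ} (M : Matrix (Fin (m + 1)) (Fin (m + 1)) R) :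
    derivative M.charpoly = ∑ i : Fin (m + 1), (M.submatrix i.succAbove i.succAbove).charpoly := by
  have hcol (i : Fin (m + 1)) : (fun k => derivative (charmatrix M k i)) = Pi.single i 1 := by
    funext k
    rcases eq_or_ne k i with rfl | h <;> simp [*]
  rw [charpoly, derivative_det]
  refine Finset.sum_congr rfl fun i _ => ?_
  -- the `i`-th term is the `(i, i)` cofactor of the characteristic matrix
  rw [hcol, ← det_transpose, ← updateRow_transpose, ← adjugate_apply,
    adjugate_fin_succ_eq_det_submatrix, ← two_mul, pow_mul, neg_one_sq, one_pow, one_mul,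
    ← transpose_submatrix, det_transpose, charpoly,
    charmatrix_submatrix _ Fin.succAbove_right_injective]

end CommRing

theorem PosSemidef.smul_one_sub_submatrix {n l : Type*} [DecidableEq n] [DecidableEq l]
    {A : Matrix n n ℝ} {x : ℝ} (hA : (x • (1 : Matrix n n ℝ) - A).PosSemidef) {e : l → n}
    (he : Function.Injective e) :
    (x • (1 : Matrix l l ℝ) - A.submatrix e e).PosSemidef := by
  simpa [submatrix_sub, submatrix_smul, submatrix_one e he] using hA.submatrix e

theorem dotProduct_mulVec_le_of_abs_le {n : Type*} [Fintype n] {A B : Matrix n n ℝ}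
    (hBA : ∀ i j, |B i j| ≤ A i j) (v : n → ℝ) :
    v ⬝ᵥ (B *ᵥ v) ≤ |v| ⬝ᵥ (A *ᵥ |v|) := by
  simp only [dotProduct, mulVec, Finset.mul_sum, Pi.abs_apply]
  refine Finset.sum_le_sum fun i _ => Finset.sum_le_sum fun j _ => ?_
  calc v i * (B i j * v j) ≤ |v i * (B i j * v j)| := le_abs_self _
    _ = |v i| * (|B i j| * |v j|) := by rw [abs_mul, abs_mul]
    _ ≤ |v i| * (A i j * |v j|) := by gcongr; exact hBA i j

section Real

variable {n : Type*} [Fintype n] [DecidableEq n] {A B : Matrix n n ℝ} {x : ℝ}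

open scoped MatrixOrder in
theorem IsHermitian.posSemidef_smul_one_sub_iff (hA : A.IsHermitian) :
    (x • (1 : Matrix n n ℝ) - A).PosSemidef ↔ ∀ i, hA.eigenvalues i ≤ x := by
  rw [← le_iff, ← Algebra.algebraMap_eq_smul_one, le_algebraMap_iff_spectrum_le hA.isSelfAdjoint,
    hA.spectrum_real_eq_range_eigenvalues]
  simp

theorem IsHermitian.isRoot_charpoly_eigenvalues (hA : A.IsHermitian) (i : n) :
    A.charpoly.IsRoot (hA.eigenvalues i) :=
  mem_spectrum_iff_isRoot_charpoly.mp (hA.eigenvalues_mem_spectrum_real i)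

theorem dotProduct_smul_one_sub_mulVec (A : Matrix n n ℝ) (x : ℝ) (v : n → ℝ) :
    v ⬝ᵥ ((x • (1 : Matrix n n ℝ) - A) *ᵥ v) = x * (v ⬝ᵥ v) - v ⬝ᵥ (A *ᵥ v) := by
  rw [sub_mulVec, smul_mulVec, one_mulVec, dotProduct_sub, dotProduct_smul, smul_eq_mul]

theorem PosSemidef.smul_one_sub_of_abs_le (hB : B.IsHermitian) (hBA : ∀ i j, |B i j| ≤ A i j)
    (hA : (x • (1 : Matrix n n ℝ) - A).PosSemidef) :
    (x • (1 : Matrix n n ℝ) - B).PosSemidef := by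
  refine .of_dotProduct_mulVec_nonneg ((isHermitian_one.smul (.all x)).sub hB) fun v => ?_
  have hAv := hA.dotProduct_mulVec_nonneg |v|
  simp only [star_trivial, dotProduct_smul_one_sub_mulVec, sub_nonneg] at hAv ⊢
  calc v ⬝ᵥ (B *ᵥ v) ≤ |v| ⬝ᵥ (A *ᵥ |v|) := dotProduct_mulVec_le_of_abs_le hBA v
    _ ≤ x * (|v| ⬝ᵥ |v|) := hAv
    _ = x * (v ⬝ᵥ v) := by simp [dotProduct, Pi.abs_apply, abs_mul_abs_self]

theorem eval_charpoly_le_of_abs_le_fin {m : ℕ} {A B : Matrix (Fin m) (Fin m) ℝ} {x : ℝ}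
    (hA : A.IsHermitian) (hB : B.IsHermitian) (hBA : ∀ i j, |B i j| ≤ A i j)
    (hx : (x • (1 : Matrix (Fin m) (Fin m) ℝ) - A).PosSemidef) :
    A.charpoly.eval x ≤ B.charpoly.eval x := by
  induction m generalizing x with
  | zero => simp
  | succ m ih =>
    obtain ⟨i₀, hi₀⟩ := Finite.exists_max hA.eigenvalues
    have hpsd (y : ℝ) (hy : hA.eigenvalues i₀ ≤ y) :
        (y • (1 : Matrix (Fin (m + 1)) (Fin (m + 1)) ℝ) - A).PosSemidef :=
      hA.posSemidef_smul_one_sub_iff.2 fun i => (hi₀ i).trans hy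
    refine eval_le_eval_of_derivative_le ?_ (fun y hy => ?_)
      (hA.posSemidef_smul_one_sub_iff.1 hx i₀)
    · rw [(hA.isRoot_charpoly_eigenvalues i₀).eq_zero, eval_charpoly, scalar_apply,
        ← smul_one_eq_diagonal]
      exact ((hpsd _ le_rfl).smul_one_sub_of_abs_le hB hBA).det_nonneg
    · rw [derivative_charpoly, derivative_charpoly, eval_finsetSum, eval_finsetSum]
      exact Finset.sum_le_sum fun i _ => ih (hA.submatrix _) (hB.submatrix _) (fun _ _ => hBA _ _)
        ((hpsd y hy.le).smul_one_sub_submatrix Fin.succAbove_right_injective)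

theorem eval_charpoly_le_of_abs_le (hA : A.IsHermitian) (hB : B.IsHermitian)
    (hBA : ∀ i j, |B i j| ≤ A i j) (hx : (x • (1 : Matrix n n ℝ) - A).PosSemidef) :
    A.charpoly.eval x ≤ B.charpoly.eval x := by
  let e := Fintype.equivFin n
  rw [← charpoly_reindex e A, ← charpoly_reindex e B]
  exact eval_charpoly_le_of_abs_le_fin (hA.submatrix _) (hB.submatrix _) (fun _ _ => hBA _ _)
    (hx.smul_one_sub_submatrix e.symm.injective)

end Real

end Matrix

open Matrix

theorem adjM_isHermitian {V : Type*} [Fintype V] (G : SimpleGraph V) : (adjM G).IsHermitian := by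
  ext i j
  simp [adjM, G.adj_comm]

theorem abs_adjM_le_adjM {V : Type*} [Fintype V] {G H : SimpleGraph V} (hle : H ≤ G) (i j : V) :
    |adjM H i j| ≤ adjM G i j := by
  by_cases h : H.Adj i j
  · simp [adjM, h, hle h]
  · simp only [adjM, if_neg h, abs_zero]
    split_ifs <;> norm_num

theorem eigenvalues_le_specRad {V : Type*} [Fintype V] [DecidableEq V] (G : SimpleGraph V)
    (i : V) : (adjM_isHermitian G).eigenvalues i ≤ specRad G :=
  le_csSup (finite_setOfPred_isRoot (charpoly_monic (adjM G)).ne_zero).bddAbove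
    ((adjM_isHermitian G).isRoot_charpoly_eigenvalues i)

/-- If `H` is a spanning subgraph of `G`, then `P_G(x) ≤ P_H(x)` for all `x ≥ ρ(G)`. -/
theorem charP_le_of_spanning_subgraph {V : Type*} [Fintype V] [DecidableEq V]
    (G H : SimpleGraph V) (hle : H ≤ G) :
    ∀ x : ℝ, specRad G ≤ x → (charP G).eval x ≤ (charP H).eval x := by
  intro x hx
  exact eval_charpoly_le_of_abs_le (adjM_isHermitian G) (adjM_isHermitian H)
    (abs_adjM_le_adjM hle) ((adjM_isHermitian G).posSemidef_smul_one_sub_iff.2 fun i =>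
      (eigenvalues_le_specRad G i).trans hx)
end
end

section
/- For a connected graph G, the characteristic polynomial comparison G ≺ (G−v)⁺ holds for any vertex v: for all x ≥ ρ(G), P_G(x) < x·P_{G−v}(x). -/
open scoped Classical
open Polynomial

noncomputable section

/-- Vertex-deleted subgraph `G - v`. -/
def del {V : Type*} (G : SimpleGraph V) (v : V) : SimpleGraph {u : V // u ≠ v} :=
  SimpleGraph.induce {u : V | u ≠ v} G

/-!
Put `N = xI - A(G - v)` and let `a` be the row of `A(G)` at `v` with the entry at `v` removed.
Expanding along `v` with a Schur complement gives `P_G(x) = P_{G-v}(x) · (x - aᵀ N⁻¹ a)`.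
For `x ≥ ρ(G)` the matrix `xI - A(G)` is positive semidefinite, and `N` is even positive
definite: if `yᵀ N y = 0` with `y ≠ 0`, then extending `y` by zero and taking absolute values
gives a nonnegative eigenvector of `A(G)` for `x` vanishing at `v`, which connectivity rules
out. Hence `P_{G-v}(x) = det N > 0`, and `aᵀ N⁻¹ a > 0` because `v` has a neighbour.
-/

namespace Matrix

variable {ι V : Type*} [Fintype ι] [Fintype V]

theorem det_eq_det_submatrix_ne_mul {R : Type*} [CommRing R] [DecidableEq V] (M : Matrix V V R)
    (v : V) [Invertible (M.submatrix (↑) (↑) : Matrix {u // u ≠ v} {u // u ≠ v} R)] :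
    M.det = (M.submatrix (↑) (↑) : Matrix {u // u ≠ v} {u // u ≠ v} R).det *
      (M v v - (fun w : {u // u ≠ v} ↦ M v w) ⬝ᵥ
        (⅟(M.submatrix (↑) (↑) : Matrix {u // u ≠ v} {u // u ≠ v} R) *ᵥ
          fun w : {u // u ≠ v} ↦ M w v)) := by
  let _ : Unique {u // ¬u ≠ v} := ⟨⟨v, not_not_intro rfl⟩, fun u ↦ Subtype.ext (not_not.mp u.2)⟩
  let _ : Invertible (M.submatrix (Equiv.sumCompl (· ≠ v)) (Equiv.sumCompl (· ≠ v))).toBlocks₁₁ :=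
    ‹Invertible (M.submatrix (↑) (↑) : Matrix {u // u ≠ v} {u // u ≠ v} R)›
  rw [← det_submatrix_equiv_self (Equiv.sumCompl (· ≠ v)),
    ← fromBlocks_toBlocks (M.submatrix _ _), det_fromBlocks₁₁, det_unique (n := {u // ¬u ≠ v})]
  have hv : ((default : {u // ¬u ≠ v}) : V) = v := not_not.mp (default : {u // ¬u ≠ v}).2
  simp only [toBlocks₁₂, toBlocks₂₁, toBlocks₂₂, sub_apply, of_apply, submatrix_apply,
    Equiv.sumCompl_apply_inl, Equiv.sumCompl_apply_inr, hv, invOf_eq_nonsing_inv, mul_apply,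
    dotProduct, mulVec, Finset.mul_sum, Finset.sum_mul, mul_assoc]
  rw [Finset.sum_comm]
  rfl

theorem dotProduct_submatrix_mulVec {R : Type*} [CommSemiring R] (M : Matrix V V R) {e : ι → V}
    (he : Function.Injective e) (y : ι → R) :
    y ⬝ᵥ (M.submatrix e e *ᵥ y) = Function.extend e y 0 ⬝ᵥ (M *ᵥ Function.extend e y 0) := by
  have hy : ∀ i, y i = Function.extend e y 0 (e i) := fun i ↦ (he.extend_apply y 0 i).symm
  have h0 : ∀ u ∉ Set.range e, Function.extend e y 0 u = 0 := fun u hu ↦ by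
    rw [Function.extend_apply' _ _ _ (by simpa using hu), Pi.zero_apply]
  refine Fintype.sum_of_injective e he _ _ (fun u hu ↦ by simp [h0 u hu]) fun i ↦ ?_
  simp only [mulVec, dotProduct, submatrix_apply, hy i]
  congr 1
  exact Fintype.sum_of_injective e he _ _ (fun u hu ↦ by simp [h0 u hu]) fun j ↦ by rw [hy j]

theorem dotProduct_abs_mulVec_abs_le [DecidableEq V] {A : Matrix V V ℝ} (hA : ∀ i j, 0 ≤ A i j)
    (x : ℝ) (w : V → ℝ) :
    |w| ⬝ᵥ ((scalar V x - A) *ᵥ |w|) ≤ w ⬝ᵥ ((scalar V x - A) *ᵥ w) := by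
  have habs : w ⬝ᵥ (A *ᵥ w) ≤ |w| ⬝ᵥ (A *ᵥ |w|) := by
    simp only [dotProduct, mulVec, Finset.mul_sum]
    refine Finset.sum_le_sum fun i _ ↦ Finset.sum_le_sum fun j _ ↦ ?_
    calc w i * (A i j * w j) ≤ |w i * (A i j * w j)| := le_abs_self _
      _ = |w| i * (A i j * |w| j) := by simp [abs_mul, abs_of_nonneg (hA i j)]
  have hsq : |w| ⬝ᵥ |w| = w ⬝ᵥ w := by simp [dotProduct, abs_mul_abs_self]
  simp only [scalar_apply, ← smul_one_eq_diagonal, sub_mulVec, smul_mulVec, one_mulVec,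
    dotProduct_sub, dotProduct_smul, hsq]
  linarith

end Matrix

namespace SimpleGraph

open Matrix

variable {V : Type*} [Fintype V] (G : SimpleGraph V)

theorem adjM_isHermitian : (adjM G).IsHermitian := by
  ext i j
  simp [adjM, adj_comm]

theorem adjM_nonneg (i j : V) : 0 ≤ adjM G i j := by
  unfold adjM
  split <;> norm_num

theorem eq_zero_of_adjM_mulVec_eq_smul (hconn : G.Connected) {z : V → ℝ} (hz : 0 ≤ z) {c : ℝ}
    (heig : adjM G *ᵥ z = c • z) {v : V} (hv : z v = 0) : z = 0 := by
  have hprop : ∀ u w, G.Adj u w → z u = 0 → z w = 0 := fun u w huw hu ↦ by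
    have hrow : (adjM G *ᵥ z) u = 0 := by simpa [hu] using congrFun heig u
    have := (Finset.sum_eq_zero_iff_of_nonneg fun t _ ↦
      mul_nonneg (G.adjM_nonneg u t) (hz t)).mp hrow w (Finset.mem_univ w)
    simpa [adjM, huw] using this
  funext u
  obtain ⟨p⟩ := hconn.preconnected v u
  induction p with
  | nil => exact hv
  | cons h _ ih => exact ih (hprop _ _ h hv)

variable [DecidableEq V]

theorem adjM_del (v : V) : adjM (del G v) = (adjM G).submatrix (↑) (↑) := rfl

theorem eval_charP (x : ℝ) : (charP G).eval x = (scalar V x - adjM G).det :=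
  eval_charpoly _ x

theorem le_specRad {μ : ℝ} (hμ : μ ∈ spectrum ℝ (adjM G)) : μ ≤ specRad G :=
  le_csSup ((finite_spectrum (adjM G)).subset fun _ ↦
    mem_spectrum_iff_isRoot_charpoly.mpr).bddAbove (mem_spectrum_iff_isRoot_charpoly.mp hμ)

theorem posSemidef_scalar_sub_adjM {x : ℝ} (hx : specRad G ≤ x) :
    (scalar V x - adjM G).PosSemidef := by
  refine posSemidef_iff_isHermitian_and_spectrum_nonneg.mpr
    ⟨(isHermitian_diagonal _).sub G.adjM_isHermitian, ?_⟩
  rw [scalar_apply, ← smul_one_eq_diagonal, ← Algebra.algebraMap_eq_smul_one,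
    ← spectrum.singleton_sub_eq]
  rintro _ ⟨_, rfl, μ, hμ, rfl⟩
  exact sub_nonneg.mpr ((G.le_specRad hμ).trans hx)

theorem scalar_sub_adjM_del (v : V) (x : ℝ) :
    scalar _ x - adjM (del G v) = (scalar V x - adjM G).submatrix (↑) (↑) := by
  ext a b
  simp [adjM_del, diagonal_apply, Subtype.val_inj]

theorem posDef_scalar_sub_adjM_del (hconn : G.Connected) (v : V) {x : ℝ} (hx : specRad G ≤ x) :
    (scalar _ x - adjM (del G v)).PosDef := by
  have hM : (scalar V x - adjM G).PosSemidef := G.posSemidef_scalar_sub_adjM hx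
  rw [scalar_sub_adjM_del]
  refine .of_dotProduct_mulVec_pos (hM.submatrix _).isHermitian fun y hy ↦ ?_
  set w := Function.extend Subtype.val y 0
  have hw : w ≠ 0 := fun h ↦ hy (funext fun i ↦ by
    rw [← Subtype.val_injective.extend_apply y 0 i]
    exact congrFun h i)
  rw [star_trivial, dotProduct_submatrix_mulVec _ Subtype.val_injective]
  have hle := dotProduct_abs_mulVec_abs_le G.adjM_nonneg x w
  have hnonneg : 0 ≤ |w| ⬝ᵥ ((scalar V x - adjM G) *ᵥ |w|) := by
    simpa using hM.dotProduct_mulVec_nonneg |w|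
  suffices |w| ⬝ᵥ ((scalar V x - adjM G) *ᵥ |w|) ≠ 0 from
    (lt_of_le_of_ne hnonneg this.symm).trans_le hle
  intro h
  have hker := (hM.dotProduct_mulVec_zero_iff |w|).mp (by simpa using h)
  have heig : adjM G *ᵥ |w| = x • |w| := by
    simp only [sub_mulVec, scalar_apply, ← smul_one_eq_diagonal, smul_mulVec, one_mulVec] at hker
    exact (sub_eq_zero.mp hker).symm
  have hwv : |w| v = 0 := by simp [w]
  exact hw (by simpa using G.eq_zero_of_adjM_mulVec_eq_smul hconn (abs_nonneg w) heig hwv)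

theorem eval_charP_eq_mul (v : V) {x : ℝ} (hx : IsUnit ((charP (del G v)).eval x)) :
    (charP G).eval x = (charP (del G v)).eval x *
      (x - (fun w : {u // u ≠ v} ↦ adjM G v w) ⬝ᵥ
        ((scalar {u // u ≠ v} x - adjM (del G v))⁻¹ *ᵥ fun w ↦ adjM G v w)) := by
  rw [eval_charP, eval_charP, scalar_sub_adjM_del] at *
  let _ := invertibleOfIsUnitDet _ hx
  have hrow : (fun w : {u // u ≠ v} ↦ (scalar V x - adjM G) v w) =
      -fun w : {u // u ≠ v} ↦ adjM G v w := by
    funext w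
    simp [diagonal_apply_ne _ (Ne.symm w.2)]
  have hcol : (fun w : {u // u ≠ v} ↦ (scalar V x - adjM G) w v) =
      -fun w : {u // u ≠ v} ↦ adjM G v w := by
    funext w
    simp [diagonal_apply_ne _ w.2, adjM, adj_comm]
  have hvv : (scalar V x - adjM G) v v = x := by simp [adjM]
  rw [det_eq_det_submatrix_ne_mul _ v, hrow, hcol, hvv, invOf_eq_nonsing_inv, neg_dotProduct,
    mulVec_neg, dotProduct_neg, neg_neg]

theorem eval_charP_lt_of_posDef (v : V) {x : ℝ}
    (hN : (scalar {u // u ≠ v} x - adjM (del G v)).PosDef)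
    (hrow : (fun w : {u // u ≠ v} ↦ adjM G v w) ≠ 0) :
    (charP G).eval x < x * (charP (del G v)).eval x := by
  have hdet : 0 < (charP (del G v)).eval x := by
    rw [eval_charP]
    exact hN.det_pos
  have hq : 0 < (fun w : {u // u ≠ v} ↦ adjM G v w) ⬝ᵥ
      ((scalar {u // u ≠ v} x - adjM (del G v))⁻¹ *ᵥ fun w ↦ adjM G v w) := by
    simpa using hN.inv.dotProduct_mulVec_pos hrow
  rw [G.eval_charP_eq_mul v hdet.ne'.isUnit]
  nlinarith

end SimpleGraph

/-- For a connected graph `G` with at least two vertices and any vertex `v`,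
`G ≺ (G-v)⁺`, i.e. `P_G(x) < x·P_{G-v}(x)` for all `x ≥ ρ(G)`. -/
theorem prec_deleted_plus_isolated {V : Type*} [Fintype V] [DecidableEq V]
    (G : SimpleGraph V) (hconn : G.Connected) (hcard : 2 ≤ Fintype.card V) (v : V) :
    ∀ x : ℝ, specRad G ≤ x → (charP G).eval x < x * (charP (del G v)).eval x := by
  intro x hx
  have : Nontrivial V := Fintype.one_lt_card_iff_nontrivial.mp hcard
  obtain ⟨u, hu⟩ := hconn.preconnected.exists_adj_of_nontrivial v
  refine G.eval_charP_lt_of_posDef v (G.posDef_scalar_sub_adjM_del hconn v hx) fun hrow ↦ ?_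
  simpa [adjM, hu] using congrFun hrow ⟨u, hu.ne.symm⟩
end
end

section
/- The characteristic polynomial of the path-block P₃^q (three complete blocks K_{q+1} glued in a path: consecutive blocks share one vertex) equals (x+1)^{3q−4}·((x−q)(x+2)+1)·((x−q)·((x−q)(x+2)+1) − 2q). -/
/-!
Write `A` for the adjacency matrix of `P₃^q`. Then `A + I = W D Wᵀ`, where the columns of `W` are
the indicator vectors of the three blocks and of the two cut vertices, and `D = diag(1,1,1,-1,-1)`:
summing `J` over the blocks counts the diagonal entry of a cut vertex twice. Hence `A + I` has
rank at most `5`, and by `X ^ 5 χ(W (D Wᵀ)) = X ^ (3q+1) χ(D Wᵀ W)` its characteristic polynomial is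
`X ^ (3q-4)` times that of the `5 × 5` matrix `D (Wᵀ W)`, whose entries are the sizes of pairwise
intersections. Shifting `X` by `1` turns `χ(A + I)` into `χ(A)`.
-/

open scoped Classical
open Polynomial

noncomputable section

/-- The `(q,b)`-path-block: `b` copies of `K_{q+1}` arranged in a path, consecutive
blocks sharing exactly one vertex. Block `k` (for `k < b`) consists of the vertices
in the interval `[k*q, (k+1)*q]` of `Fin (b*q+1)`. -/
def pathBlock (q b : ℕ) : SimpleGraph (Fin (b * q + 1)) where
  Adj i j := i ≠ j ∧ ∃ k < b, k * q ≤ (i : ℕ) ∧ (i : ℕ) ≤ (k + 1) * q ∧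
      k * q ≤ (j : ℕ) ∧ (j : ℕ) ≤ (k + 1) * q
  symm := ⟨by
    rintro i j ⟨hne, k, hk, h1, h2, h3, h4⟩
    exact ⟨hne.symm, k, hk, h3, h4, h1, h2⟩⟩
  loopless := ⟨fun i h => h.1 rfl⟩

section

open Matrix Finset

section Incidence

variable {V ι : Type*} [DecidableEq V]

def incidenceMatrix (R : Type*) [Semiring R] (S : ι → Finset V) : Matrix V ι R :=
  of fun v a => if v ∈ S a then 1 else 0

lemma incidenceMatrix_transpose_mul (R : Type*) [Semiring R] [Fintype V] (S : ι → Finset V) :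
    (incidenceMatrix R S)ᵀ * incidenceMatrix R S = of fun a b => (#(S a ∩ S b) : R) := by
  ext a b
  rw [mul_apply]
  simp only [incidenceMatrix, transpose_apply, of_apply, mul_ite, mul_one, mul_zero, ← ite_and,
    sum_boole]
  congr 2
  ext v
  simp [and_comm]

end Incidence

def finIcc (n a b : ℕ) : Finset (Fin n) := {v | (v : ℕ) ∈ Icc a b}

@[simp]
lemma mem_finIcc {n a b : ℕ} {v : Fin n} : v ∈ finIcc n a b ↔ a ≤ v ∧ (v : ℕ) ≤ b := by
  simp [finIcc]

lemma finIcc_inter_finIcc (n a b c d : ℕ) :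
    finIcc n a b ∩ finIcc n c d = finIcc n (max a c) (min b d) := by
  ext v
  simp only [mem_inter, mem_finIcc]
  omega

lemma card_finIcc {n a b : ℕ} (hb : b < n) : #(finIcc n a b) = b + 1 - a := by
  rw [← Nat.card_Icc, ← card_map Fin.valEmbedding]
  congr 1
  ext k
  simp only [mem_map, mem_finIcc, Fin.valEmbedding_apply, mem_Icc]
  exact ⟨by rintro ⟨v, hv, rfl⟩; exact hv, fun hk => ⟨⟨k, by omega⟩, hk, rfl⟩⟩

lemma pathBlock_three_adj_iff {q : ℕ} {u v : Fin (3 * q + 1)} :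
    (pathBlock q 3).Adj u v ↔ u ≠ v ∧ ((u ≤ q ∧ v ≤ q) ∨
      (q ≤ u ∧ (u : ℕ) ≤ 2 * q ∧ q ≤ v ∧ (v : ℕ) ≤ 2 * q) ∨ (2 * q ≤ u ∧ 2 * q ≤ v)) := by
  refine and_congr_right fun _ => ⟨?_, ?_⟩
  · rintro ⟨k, hk, h⟩
    interval_cases k <;> omega
  · rintro (h | h | h)
    exacts [⟨0, by omega⟩, ⟨1, by omega⟩, ⟨2, by omega⟩]

namespace PathBlockThree

/-- The cliques `[0, q]`, `[q, 2q]`, `[2q, 3q]` (the blocks) and `{q}`, `{2q}` (the cut vertices)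
of `P₃^q`, as intervals `[lo q a, hi q a]`. -/
def lo (q : ℕ) : Fin 5 → ℕ := ![0, q, 2 * q, q, 2 * q]

def hi (q : ℕ) : Fin 5 → ℕ := ![q, 2 * q, 3 * q, q, 2 * q]

def clique (q : ℕ) (a : Fin 5) : Finset (Fin (3 * q + 1)) := finIcc _ (lo q a) (hi q a)

def sign (R : Type*) [Ring R] : Fin 5 → R := ![1, 1, 1, -1, -1]

def gram {R : Type*} [Semiring R] (Q : R) : Matrix (Fin 5) (Fin 5) R :=
  !![Q + 1, 1, 0, 1, 0;
     1, Q + 1, 1, 1, 1;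
     0, 1, Q + 1, 0, 1;
     1, 1, 0, 1, 0;
     0, 1, 1, 0, 1]

lemma adjM_add_one_eq (q : ℕ) :
    adjM (pathBlock q 3) + 1 =
      incidenceMatrix ℝ (clique q) * diagonal (sign ℝ) * (incidenceMatrix ℝ (clique q))ᵀ := by
  ext u v
  rw [Matrix.add_apply, mul_apply]
  simp only [one_apply, adjM, pathBlock_three_adj_iff, mul_diagonal, transpose_apply,
    Fin.sum_univ_five, incidenceMatrix, of_apply, Fin.ext_iff, ite_mul, mul_ite, one_mul, mul_one,
    zero_mul, mul_zero, ← ite_and]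
  split_ifs <;>
    simp only [clique, lo, hi, sign, mem_finIcc, cons_val_zero, cons_val_one, cons_val_two,
      cons_val_three, cons_val_four, head_cons, tail_cons] at * <;>
    first | omega | norm_num

lemma incidenceMatrix_clique_gram {q : ℕ} (hq : 0 < q) :
    (incidenceMatrix ℝ (clique q))ᵀ * incidenceMatrix ℝ (clique q) = gram (q : ℝ) := by
  have hhi : ∀ a, hi q a < 3 * q + 1 := by
    intro a
    fin_cases a <;> simp [hi] <;> omega
  ext a b
  rw [incidenceMatrix_transpose_mul, of_apply, clique, clique, finIcc_inter_finIcc,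
    card_finIcc ((min_le_left _ _).trans_lt (hhi a))]
  fin_cases a <;> fin_cases b <;> simp [lo, hi, gram] <;> norm_cast <;> omega

lemma charpoly_diagonal_sign_mul_gram {R : Type*} [CommRing R] (Q : R) :
    (diagonal (sign R) * gram Q).charpoly =
      ((X - 1 - C Q) * (X + 1) + 1) * ((X - 1 - C Q) * ((X - 1 - C Q) * (X + 1) + 1) - 2 * C Q) := by
  have hcharmatrix : charmatrix (diagonal (sign R) * gram Q) =
      !![X - C (Q + 1), -1, 0, -1, 0;
         -1, X - C (Q + 1), -1, -1, -1;
         0, -1, X - C (Q + 1), 0, -1;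
         1, 1, 0, X + 1, 0;
         0, 1, 1, 0, X + 1] := by
    ext i j
    fin_cases i <;> fin_cases j <;> simp [sign, gram]
  rw [charpoly, hcharmatrix]
  simp [det_succ_row_zero, Fin.sum_univ_succ, Fin.succAbove]
  ring

lemma charpoly_adjM_add_one {q : ℕ} (hq : 2 ≤ q) :
    (adjM (pathBlock q 3) + 1).charpoly = X ^ (3 * q - 4) *
      (((X - 1 - C (q : ℝ)) * (X + 1) + 1) *
        ((X - 1 - C (q : ℝ)) * ((X - 1 - C (q : ℝ)) * (X + 1) + 1) - 2 * C (q : ℝ))) := by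
  have hrank := charpoly_mul_comm' (incidenceMatrix ℝ (clique q))
    (diagonal (sign ℝ) * (incidenceMatrix ℝ (clique q))ᵀ)
  simp only [Matrix.mul_assoc, incidenceMatrix_clique_gram (by omega : 0 < q),
    charpoly_diagonal_sign_mul_gram, Fintype.card_fin] at hrank
  rw [adjM_add_one_eq, Matrix.mul_assoc, ← (isRegular_X_pow 5).left.eq_iff, hrank,
    ← mul_assoc (X ^ 5), ← pow_add, show 5 + (3 * q - 4) = 3 * q + 1 by omega]

end PathBlockThree

end

/-- The characteristic polynomial of the `(q,3)`-path-block `P₃^q` equals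
`(x+1)^(3q-4) * ((x-q)(x+2)+1) * ((x-q)((x-q)(x+2)+1) - 2q)`. -/
theorem charP_pathBlock_three (q : ℕ) (hq : 2 ≤ q) :
    charP (pathBlock q 3) =
      (X + 1) ^ (3 * q - 4) * ((X - C (q : ℝ)) * (X + 2) + 1) *
        ((X - C (q : ℝ)) * ((X - C (q : ℝ)) * (X + 2) + 1) - C (2 * (q : ℝ))) := by
  have hshift : adjM (pathBlock q 3) = adjM (pathBlock q 3) + 1 - Matrix.scalar _ (1 : ℝ) := by
    simp
  rw [_root_.charP, hshift, Matrix.charpoly_sub_scalar, PathBlockThree.charpoly_adjM_add_one hq]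
  simp only [mul_comp, sub_comp, add_comp, pow_comp, X_comp, C_comp, one_comp, ofNat_comp, map_one,
    C_mul, C_ofNat]
  ring
end
end

section
/- For 2 ≤ q ≤ 4, the polynomial f_q(x) = (x−q)·((x−q)(x+2)+1) − 2q satisfies f_q(q + √q/2) ≤ 0 and f_q(q+1) ≥ 0; hence the unique root of f_q on (q, ∞) lies in [q + √q/2, q+1]. -/
/-!
On `[q, ∞)` the cubic `f_q` is strictly increasing, so a root `x > q` is bracketed by any
`a ≤ b` in that interval with `f_q a ≤ 0 ≤ f_q b`. At `q + 1` the value is `4 - q`; at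
`q + √q/2` the bound `√q ≤ 2` reduces the value to at most `(q - 1)(q - 4)/4`.
-/

open Set

def fq (q x : ℝ) : ℝ := (x - q) * ((x - q) * (x + 2) + 1) - 2 * q

lemma fq_sub_fq (q x y : ℝ) :
    fq q y - fq q x = (y - x) * ((y - q) ^ 2 + (y - q) * (x - q) + (x - q) ^ 2
      + (q + 2) * ((y - q) + (x - q)) + 1) := by
  unfold fq; ring

lemma fq_strictMonoOn {q : ℝ} (hq : -2 ≤ q) : StrictMonoOn (fq q) (Ici q) := by
  intro x hx y hy hxy
  rw [mem_Ici] at hx hy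
  have hfactor : 0 < (y - q) ^ 2 + (y - q) * (x - q) + (x - q) ^ 2
      + (q + 2) * ((y - q) + (x - q)) + 1 := by
    have := mul_nonneg (sub_nonneg.2 hy) (sub_nonneg.2 hx)
    have := mul_nonneg (neg_le_iff_add_nonneg.1 hq) (add_nonneg (sub_nonneg.2 hy) (sub_nonneg.2 hx))
    positivity
  have := fq_sub_fq q x y
  linarith [mul_pos (sub_pos.2 hxy) hfactor]

lemma fq_add_one (q : ℝ) : fq q (q + 1) = 4 - q := by
  unfold fq; ring

lemma fq_add_sqrt_div_two_nonpos {q : ℝ} (h1 : 1 ≤ q) (h4 : q ≤ 4) :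
    fq q (q + √q / 2) ≤ 0 := by
  have hsq : √q ^ 2 = q := Real.sq_sqrt (by linarith)
  have hs2 : √q ≤ 2 := Real.sqrt_le_iff.2 ⟨by norm_num, by linarith⟩
  have hvalue : fq q (q + √q / 2) = q ^ 2 / 4 - 3 * q / 2 + √q * (q + 4) / 8 := by
    unfold fq
    linear_combination (q / 4 + 1 / 2 + √q / 8) * hsq
  rw [hvalue]
  nlinarith [mul_nonneg (sub_nonneg.2 hs2) (by linarith : (0 : ℝ) ≤ q + 4),
    mul_nonneg (sub_nonneg.2 h1) (sub_nonneg.2 h4)]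

/-- For `2 ≤ q ≤ 4`, `f_q(q + √q/2) ≤ 0` and `f_q(q+1) ≥ 0`, where
`f_q(x) = (x-q)((x-q)(x+2)+1) - 2q`; hence the unique root of `f_q` on `(q, ∞)`
lies in `[q + √q/2, q + 1]`. -/
theorem fq_root_bounds_small (q : ℕ) (hq2 : 2 ≤ q) (hq4 : q ≤ 4) :
    (((q : ℝ) + Real.sqrt q / 2) - q) *
        ((((q : ℝ) + Real.sqrt q / 2) - q) * (((q : ℝ) + Real.sqrt q / 2) + 2) + 1)
        - 2 * q ≤ 0 ∧
    0 ≤ (((q : ℝ) + 1) - q) * ((((q : ℝ) + 1) - q) * (((q : ℝ) + 1) + 2) + 1) - 2 * q ∧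
    ∀ x : ℝ, (q : ℝ) < x → (x - q) * ((x - q) * (x + 2) + 1) - 2 * q = 0 →
      (q : ℝ) + Real.sqrt q / 2 ≤ x ∧ x ≤ (q : ℝ) + 1 := by
  have h1 : (1 : ℝ) ≤ q := by exact_mod_cast (by omega : 1 ≤ q)
  have h4 : (q : ℝ) ≤ 4 := by exact_mod_cast hq4
  have hlower : fq q (q + √q / 2) ≤ 0 := fq_add_sqrt_div_two_nonpos h1 h4
  have hupper : 0 ≤ fq q (q + 1) := by rw [fq_add_one]; linarith
  refine ⟨hlower, hupper, fun x hx hroot => ?_⟩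
  have hfx : fq q x = 0 := hroot
  have hmono := fq_strictMonoOn (by linarith : (-2 : ℝ) ≤ q)
  have hxmem : x ∈ Ici (q : ℝ) := hx.le
  constructor
  · exact (hmono.le_iff_le (by simp only [mem_Ici, le_add_iff_nonneg_right]; positivity) hxmem).1 (hfx ▸ hlower)
  · exact (hmono.le_iff_le hxmem (by simp)).1 (hfx ▸ hupper)
end

section
/- The spectral radius of the path P_n equals 2·cos(π/(n+1)), and for any tree T on n vertices, 2·cos(π/(n+1)) ≤ ρ(T) ≤ √(n−1), where the upper bound is attained by the star K_{1,n−1}. -/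
/-!
Upper bounds come from the Collatz–Wielandt inequality: if `y > 0` and `yᵀ B ≤ c yᵀ` for a
nonnegative matrix `B`, every real eigenvalue of `B` has absolute value at most `c`. The positive
eigenvectors `(sin (k π / (n + 1)))ₖ` of `P_n` and `(√(n - 1), 1, …, 1)` of the star therefore pin
down their spectral radii. For a tree, `ρ²` is an eigenvalue of `A²`, whose column sums count the
walks of length two ending at a vertex; such walks have distinct first edges, so there are at most
`n - 1` of them.

For the lower bound put `θ = π / (n + 1)` and `g k = sin (k θ) / sin ((k + 1) θ)`. Root the tree and
let `x` be the product, along the path to the root, of the weights `g |T_w|` (`T_w` the subtree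
below `w`). Since `g` is subadditive below `n` and `g (k - 1) + 1 / g k = 2 cos θ`, one gets
`A x ≥ 2 cos θ • x` entrywise, and the Rayleigh quotient gives `ρ ≥ 2 cos θ`.
-/

open scoped Classical
open Polynomial

noncomputable section

open Real Finset
open scoped Matrix

section Spectral

variable {V : Type*} [Fintype V]

lemma adjM_nonneg (G : SimpleGraph V) (a b : V) : 0 ≤ adjM G a b := by
  unfold adjM; split_ifs <;> norm_num

lemma adjM_transpose (G : SimpleGraph V) : (adjM G)ᵀ = adjM G := by
  ext a b; simp [adjM, G.adj_comm]

/-- Collatz–Wielandt bound. -/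
lemma abs_le_of_mulVec_eq_smul {B : Matrix V V ℝ} (hB : ∀ i j, 0 ≤ B i j) {y : V → ℝ}
    (hy : ∀ i, 0 < y i) {c : ℝ} (hyc : y ᵥ* B ≤ c • y) {v : V → ℝ} (hv : v ≠ 0) {t : ℝ}
    (ht : B *ᵥ v = t • v) : |t| ≤ c := by
  obtain ⟨i₀, hi₀⟩ := Function.ne_iff.mp hv
  have hpos : 0 < ∑ i, y i * |v i| :=
    sum_pos' (fun i _ => by have := hy i; positivity)
      ⟨i₀, mem_univ _, mul_pos (hy i₀) (abs_pos.mpr hi₀)⟩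
  have hrow (i : V) : |t| * |v i| ≤ ∑ j, B i j * |v j| := by
    calc |t| * |v i| = |∑ j, B i j * v j| := by
          rw [← abs_mul, ← smul_eq_mul, ← Pi.smul_apply, ← ht]; rfl
      _ ≤ ∑ j, |B i j * v j| := abs_sum_le_sum_abs _ _
      _ = ∑ j, B i j * |v j| := by simp [abs_mul, abs_of_nonneg (hB _ _)]
  refine le_of_mul_le_mul_right ?_ hpos
  calc |t| * ∑ i, y i * |v i| = ∑ i, y i * (|t| * |v i|) := by
        rw [mul_sum]; congr! 1; ring
    _ ≤ ∑ i, y i * ∑ j, B i j * |v j| := by gcongr with i; exacts [(hy i).le, hrow i]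
    _ = ∑ j, (y ᵥ* B) j * |v j| := by
        simp only [Matrix.vecMul, dotProduct, mul_sum, sum_mul, mul_assoc]
        exact sum_comm
    _ ≤ ∑ j, (c * y j) * |v j| := by gcongr with j; exact hyc j
    _ = c * ∑ i, y i * |v i| := by simp only [mul_sum, mul_assoc]

variable [DecidableEq V]

lemma isRoot_charP_iff (G : SimpleGraph V) (t : ℝ) :
    (charP G).IsRoot t ↔ ∃ v ≠ 0, adjM G *ᵥ v = t • v := by
  rw [IsRoot.def, _root_.charP, Matrix.eval_charpoly, ← Matrix.exists_mulVec_eq_zero_iff]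
  simp [Matrix.sub_mulVec, sub_eq_zero, eq_comm]

lemma exists_isRoot_charP_forall_dotProduct_le [Nonempty V] (G : SimpleGraph V) :
    ∃ μ, (charP G).IsRoot μ ∧ ∀ x : V → ℝ, x ⬝ᵥ (adjM G *ᵥ x) ≤ μ * (x ⬝ᵥ x) := by
  set T := Matrix.toEuclideanLin (adjM G)
  have hT : T.IsSymmetric := by
    rw [Matrix.isSymmetric_toEuclideanLin_iff, Matrix.IsHermitian,
      Matrix.conjTranspose_eq_transpose_of_trivial, adjM_transpose]
  set μ : ℝ := ⨆ y : {y : EuclideanSpace ℝ V // y ≠ 0},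
    RCLike.re (inner ℝ (T y) (y : EuclideanSpace ℝ V)) / ‖(y : EuclideanSpace ℝ V)‖ ^ 2
  have hμ : Module.End.HasEigenvalue T μ := hT.hasEigenvalue_iSup_of_finiteDimensional
  obtain ⟨w, hw⟩ := hμ.exists_hasEigenvector
  refine ⟨μ, (isRoot_charP_iff G μ).mpr ⟨WithLp.ofLp w, by simpa using hw.2,
    congrArg WithLp.ofLp hw.apply_eq_smul⟩, fun x => ?_⟩
  rcases eq_or_ne x 0 with rfl | hx
  · simp
  have hx' : WithLp.toLp 2 x ≠ 0 := by simpa using hx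
  have hbdd : BddAbove (Set.range fun y : {y : EuclideanSpace ℝ V // y ≠ 0} =>
      RCLike.re (inner ℝ (T y) (y : EuclideanSpace ℝ V)) / ‖(y : EuclideanSpace ℝ V)‖ ^ 2) := by
    refine ⟨‖LinearMap.toContinuousLinearMap T‖, ?_⟩
    rintro _ ⟨y, rfl⟩
    exact (le_abs_self _).trans ((LinearMap.toContinuousLinearMap T).rayleighQuotient_le_norm y)
  have h : RCLike.re (inner ℝ (T (WithLp.toLp 2 x)) (WithLp.toLp 2 x)) / ‖WithLp.toLp 2 x‖ ^ 2
      ≤ μ := le_ciSup hbdd ⟨WithLp.toLp 2 x, hx'⟩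
  rw [← real_inner_self_eq_norm_sq, div_le_iff₀ (real_inner_self_pos.mpr hx')] at h
  rw [EuclideanSpace.inner_eq_star_dotProduct (WithLp.toLp 2 x)] at h
  simpa [EuclideanSpace.inner_eq_star_dotProduct, T, Matrix.toLpLin_apply, dotProduct_comm] using h

lemma bddAbove_isRoot_charP (G : SimpleGraph V) : BddAbove {t | (charP G).IsRoot t} :=
  (Polynomial.finite_setOfPred_isRoot (Matrix.charpoly_monic (adjM G)).ne_zero).bddAbove

lemma specRad_le_of_forall_isRoot_le [Nonempty V] (G : SimpleGraph V) {b : ℝ}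
    (h : ∀ t, (charP G).IsRoot t → t ≤ b) : specRad G ≤ b :=
  have ⟨μ, hμ, _⟩ := exists_isRoot_charP_forall_dotProduct_le G
  csSup_le ⟨μ, hμ⟩ h

lemma le_specRad_of_smul_le_mulVec (G : SimpleGraph V) {x : V → ℝ} (hx₀ : 0 ≤ x) (hx : x ≠ 0)
    {c : ℝ} (hc : c • x ≤ adjM G *ᵥ x) : c ≤ specRad G := by
  obtain ⟨i, hi⟩ := Function.ne_iff.mp hx
  have : Nonempty V := ⟨i⟩
  obtain ⟨μ, hμ, hrayleigh⟩ := exists_isRoot_charP_forall_dotProduct_le G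
  have hxx : 0 < x ⬝ᵥ x := sum_pos' (fun j _ => mul_self_nonneg (x j))
    ⟨i, mem_univ _, mul_self_pos.mpr hi⟩
  have hquad : c * (x ⬝ᵥ x) ≤ x ⬝ᵥ (adjM G *ᵥ x) := by
    rw [← smul_eq_mul, ← dotProduct_smul]
    exact sum_le_sum fun j _ => mul_le_mul_of_nonneg_left (hc j) (hx₀ j)
  exact (le_of_mul_le_mul_right (hquad.trans (hrayleigh x)) hxx).trans
    (le_csSup (bddAbove_isRoot_charP G) hμ)

lemma specRad_eq_of_pos_eigenvector [Nonempty V] (G : SimpleGraph V) {y : V → ℝ}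
    (hy : ∀ i, 0 < y i) {c : ℝ} (hc : adjM G *ᵥ y = c • y) : specRad G = c := by
  have hy0 : y ≠ 0 := Function.ne_iff.mpr ⟨Classical.arbitrary V, (hy _).ne'⟩
  refine le_antisymm (specRad_le_of_forall_isRoot_le G fun t ht => ?_)
    (le_specRad_of_smul_le_mulVec G (fun i => (hy i).le) hy0 hc.ge)
  obtain ⟨v, hv, hvt⟩ := (isRoot_charP_iff G t).mp ht
  refine (le_abs_self t).trans (abs_le_of_mulVec_eq_smul (adjM_nonneg G) hy ?_ hv hvt)
  rw [← Matrix.mulVec_transpose, adjM_transpose, hc]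

end Spectral


lemma sin_mul_sin_add_add (x y t : ℝ) :
    sin x * sin (x + y + t) = sin (x + y) * sin (x + t) - sin y * sin t := by
  simp only [sin_add, cos_add]
  linear_combination (-(sin y * sin t)) * sin_sq_add_cos_sq x

lemma sin_sub_add_sin_add (a t : ℝ) : sin (a - t) + sin (a + t) = 2 * cos t * sin a := by
  rw [sin_sub, sin_add]; ring

def pathAngle (n : ℕ) : ℝ := π / (n + 1)

section PathAngle

variable {n : ℕ}

lemma natCast_mul_pathAngle_le_pi {k : ℕ} (hk : k ≤ n + 1) : k * pathAngle n ≤ π := by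
  rw [pathAngle, mul_div_left_comm]
  exact mul_le_of_le_one_right pi_pos.le ((div_le_one (by positivity)).mpr (by exact_mod_cast hk))

lemma sin_natCast_mul_pathAngle_pos {k : ℕ} (hk : 0 < k) (hkn : k ≤ n) :
    0 < sin (k * pathAngle n) := by
  refine sin_pos_of_pos_of_lt_pi (by unfold pathAngle; positivity) ?_
  calc (k : ℝ) * pathAngle n < (k + 1 : ℕ) * pathAngle n := by
        gcongr; · unfold pathAngle; positivity
        · exact_mod_cast k.lt_succ_self
    _ ≤ π := natCast_mul_pathAngle_le_pi (by omega)

lemma sin_natCast_mul_pathAngle_nonneg {k : ℕ} (hk : k ≤ n + 1) :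
    0 ≤ sin (k * pathAngle n) :=
  sin_nonneg_of_nonneg_of_le_pi (by unfold pathAngle; positivity) (natCast_mul_pathAngle_le_pi hk)

lemma sin_succ_mul_pathAngle : sin ((n + 1 : ℕ) * pathAngle n) = 0 := by
  rw [pathAngle, Nat.cast_succ, mul_div_cancel₀ _ (by positivity), sin_pi]

def sinRatio (n k : ℕ) : ℝ := sin (k * pathAngle n) / sin ((k + 1 : ℕ) * pathAngle n)

lemma sinRatio_zero : sinRatio n 0 = 0 := by simp [sinRatio]

lemma sinRatio_pos {k : ℕ} (hk : 0 < k) (hkn : k < n) : 0 < sinRatio n k :=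
  div_pos (sin_natCast_mul_pathAngle_pos hk hkn.le) (sin_natCast_mul_pathAngle_pos k.succ_pos hkn)

lemma inv_sinRatio_self : (sinRatio n n)⁻¹ = 0 := by
  rw [sinRatio, inv_div, sin_succ_mul_pathAngle, zero_div]

lemma sinRatio_add_inv_sinRatio_succ {k : ℕ} (hk : k < n) :
    sinRatio n k + (sinRatio n (k + 1))⁻¹ = 2 * cos (pathAngle n) := by
  have hsin := (sin_natCast_mul_pathAngle_pos k.succ_pos hk).ne'
  rw [sinRatio, sinRatio, inv_div, ← add_div, div_eq_iff hsin,
    ← sin_sub_add_sin_add ((k + 1 : ℕ) * pathAngle n) (pathAngle n)]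
  push_cast; ring_nf

lemma sinRatio_add_le {k l : ℕ} (h : k + l < n) :
    sinRatio n (k + l) ≤ sinRatio n k + sinRatio n l := by
  set S : ℕ → ℝ := fun j => sin (j * pathAngle n) with hS
  have hpos {j : ℕ} (hj : 0 < j) (hjn : j ≤ n) : 0 < S j := sin_natCast_mul_pathAngle_pos hj hjn
  have hnonneg {j : ℕ} (hj : j ≤ n + 1) : 0 ≤ S j := sin_natCast_mul_pathAngle_nonneg hj
  have hsin₁ : S k * S (k + l + 2) = S (k + l + 1) * S (k + 1) - S (l + 1) * S 1 := by
    have := sin_mul_sin_add_add (k * pathAngle n) ((l + 1 : ℕ) * pathAngle n) (pathAngle n)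
    simp only [hS]; push_cast at this ⊢; ring_nf at this ⊢; linarith
  have hsin₂ : S k * S (k + l + 1) = S (k + l) * S (k + 1) - S l * S 1 := by
    have := sin_mul_sin_add_add (k * pathAngle n) (l * pathAngle n) (pathAngle n)
    simp only [hS]; push_cast at this ⊢; ring_nf at this ⊢; linarith
  have h1 := hpos (k.succ_pos) (by omega)
  have h2 := hpos (l.succ_pos) (by omega)
  have h3 := hpos (k + l).succ_pos h
  have hdiff : sinRatio n k + sinRatio n l - sinRatio n (k + l)
      = S k * S l * S (k + l + 2) / (S (k + 1) * S (l + 1) * S (k + l + 1)) := by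
    have hR (j : ℕ) : sinRatio n j = S j / S (j + 1) := rfl
    rw [hR, hR, hR]
    field_simp
    linear_combination S (l + 1) * hsin₂ - S l * hsin₁
  have := mul_nonneg (mul_nonneg (hnonneg (j := k) (by omega)) (hnonneg (j := l) (by omega)))
    (hnonneg (j := k + l + 2) (by omega))
  rw [← sub_nonneg, hdiff]
  positivity

lemma sinRatio_sum_le {ι : Type*} (s : Finset ι) (f : ι → ℕ) (h : ∑ i ∈ s, f i < n) :
    sinRatio n (∑ i ∈ s, f i) ≤ ∑ i ∈ s, sinRatio n (f i) := by
  induction s using cons_induction with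
  | empty => simp [sinRatio_zero]
  | cons a s ha ih =>
    rw [sum_cons] at h ⊢
    rw [sum_cons]
    exact (sinRatio_add_le h).trans (add_le_add_right (ih (by omega)) _)

end PathAngle

lemma adjM_pathGraph_mulVec {n : ℕ} (f : ℕ → ℝ) (h₀ : f 0 = 0) (hn : f (n + 1) = 0) (k : Fin n) :
    (adjM (SimpleGraph.pathGraph n) *ᵥ fun j => f (j + 1)) k = f k + f (k + 2) := by
  have hsplit (j : Fin n) : adjM (SimpleGraph.pathGraph n) k j * f (j + 1) =
      (if (j : ℕ) = k + 1 then f (j + 1) else 0) + (if (j : ℕ) + 1 = k then f (j + 1) else 0) := by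
    simp only [adjM, SimpleGraph.pathGraph_adj]
    split_ifs <;> first | omega | simp
  simp only [Matrix.mulVec, dotProduct, hsplit, sum_add_distrib]
  rw [Fin.sum_univ_eq_sum_range (fun j => if j = k + 1 then f (j + 1) else 0),
    Fin.sum_univ_eq_sum_range (fun j => if j + 1 = k then f (j + 1) else 0)]
  have hshift := sum_range_succ' (fun i => if i = (k : ℕ) then f i else 0) n
  simp only [sum_ite_eq', mem_range, h₀, ite_self, add_zero] at hshift
  rw [if_pos (by omega)] at hshift
  rw [sum_ite_eq', ← hshift, add_comm]
  split_ifs with hk <;> simp only [mem_range] at hk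
  · rfl
  · rw [show (k : ℕ) + 2 = n + 1 by omega, hn]

theorem specRad_pathGraph {n : ℕ} (hn : 1 ≤ n) :
    specRad (SimpleGraph.pathGraph n) = 2 * cos (pathAngle n) := by
  have : Nonempty (Fin n) := ⟨⟨0, hn⟩⟩
  refine specRad_eq_of_pos_eigenvector _ (y := fun k : Fin n => sin ((k + 1 : ℕ) * pathAngle n))
    (fun k => sin_natCast_mul_pathAngle_pos k.succ_pos k.isLt) ?_
  ext k
  rw [adjM_pathGraph_mulVec (fun j => sin (j * pathAngle n)) (by simp) sin_succ_mul_pathAngle,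
    Pi.smul_apply, smul_eq_mul, ← sin_sub_add_sin_add]
  push_cast; ring_nf

theorem specRad_completeBipartiteGraph_fin_one (m : ℕ) :
    specRad (completeBipartiteGraph (Fin 1) (Fin m)) = √m := by
  have hsqrt (b : Fin m) : 0 < √(m : ℝ) := Real.sqrt_pos.mpr (by exact_mod_cast b.pos)
  refine specRad_eq_of_pos_eigenvector _ (y := Sum.elim (fun _ => 1) (fun _ => (√m)⁻¹))
    (by rintro (_ | b); exacts [one_pos, inv_pos.mpr (hsqrt b)]) ?_
  ext (a | b)
  · simp [Matrix.mulVec, dotProduct, Fintype.sum_sum_type, adjM, ← div_eq_mul_inv]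
  · simp [Matrix.mulVec, dotProduct, Fintype.sum_sum_type, adjM, (hsqrt b).ne']

namespace SimpleGraph

variable {V : Type*}

/-- The edges of `T` are the pairs `{v, parent v}` with `v ≠ root`; `parent root` is arbitrary. -/
structure Rooting (T : SimpleGraph V) where
  root : V
  parent : V → V
  depth : V → ℕ
  depth_eq_zero_iff : ∀ v, depth v = 0 ↔ v = root
  depth_parent : ∀ v, v ≠ root → depth (parent v) + 1 = depth v
  adj_iff : ∀ a b, T.Adj a b ↔ a ≠ root ∧ parent a = b ∨ b ≠ root ∧ parent b = a

theorem IsTree.nonempty_rooting {T : SimpleGraph V} (hT : T.IsTree) : Nonempty T.Rooting := by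
  obtain ⟨r⟩ := hT.connected.nonempty
  choose pth hpth using fun v => hT.existsUnique_path v r
  have hnil : pth r = Walk.nil := ((hpth r).2 _ Walk.IsPath.nil).symm
  have hcons {a b : V} (hab : T.Adj a b) (ha : a ∉ (pth b).support) :
      a ≠ r ∧ (pth a).snd = b := by
    refine ⟨fun h => ha (h ▸ (pth b).end_mem_support), ?_⟩
    rw [← (hpth a).2 _ ((hpth b).1.cons ha (h := hab)), Walk.snd_cons]
  have hlt {a b : V} (ha : a ∈ (pth b).support) (hab : a ≠ b) :
      (pth a).length < (pth b).length := by
    have hdrop := (hpth a).2 _ ((hpth b).1.dropUntil ha)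
    have htake : ((pth b).takeUntil a ha).length ≠ 0 :=
      fun h => hab (Walk.eq_of_length_eq_zero h).symm
    have := congrArg Walk.length ((pth b).take_spec ha)
    rw [Walk.length_append, hdrop] at this
    omega
  refine ⟨⟨r, fun v => (pth v).snd, fun v => (pth v).length, fun v => ?_, fun v hv => ?_,
    fun a b => ⟨fun hab => ?_, ?_⟩⟩⟩
  · refine ⟨Walk.eq_of_length_eq_zero, ?_⟩
    rintro rfl
    rw [hnil, Walk.length_nil]
  · have hne : ¬(pth v).Nil := Walk.not_nil_of_ne hv
    rw [← (hpth _).2 _ (hpth v).1.tail, Walk.length_tail_add_one hne]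
  · by_cases ha : a ∈ (pth b).support
    · by_cases hb : b ∈ (pth a).support
      · exact absurd (hlt ha hab.ne) (hlt hb hab.ne').le.not_gt
      · exact Or.inr (hcons hab.symm hb)
    · exact Or.inl (hcons hab ha)
  · rintro (⟨ha, rfl⟩ | ⟨hb, rfl⟩)
    · exact Walk.adj_snd (Walk.not_nil_of_ne ha)
    · exact (Walk.adj_snd (Walk.not_nil_of_ne hb)).symm

namespace Rooting

variable {T : SimpleGraph V} (R : T.Rooting)

@[simp]
lemma depth_root : R.depth R.root = 0 := (R.depth_eq_zero_iff _).mpr rfl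

lemma ne_root_of_depth_pos {v : V} (hv : 0 < R.depth v) : v ≠ R.root :=
  fun h => by simp [h] at hv

lemma depth_iterate_parent {u : V} {k : ℕ} (hk : k ≤ R.depth u) :
    R.depth (R.parent^[k] u) = R.depth u - k := by
  induction k with
  | zero => rfl
  | succ k ih =>
    have hk' := ih (by omega)
    have := R.depth_parent _ (R.ne_root_of_depth_pos (by omega : 0 < R.depth (R.parent^[k] u)))
    rw [Function.iterate_succ_apply']
    omega

lemma iterate_parent_depth (u : V) : R.parent^[R.depth u] u = R.root := by
  rw [← R.depth_eq_zero_iff, R.depth_iterate_parent le_rfl, Nat.sub_self]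

/-- The product of `a` over the vertices of the path from `u` up to the root, root excluded. -/
def pathProd (a : V → ℝ) (u : V) : ℝ := ∏ k ∈ range (R.depth u), a (R.parent^[k] u)

lemma pathProd_of_ne_root (a : V → ℝ) {u : V} (hu : u ≠ R.root) :
    R.pathProd a u = a u * R.pathProd a (R.parent u) := by
  rw [pathProd, ← R.depth_parent u hu, prod_range_succ', mul_comm]
  simp only [Function.iterate_succ_apply, Function.iterate_zero_apply, pathProd]

lemma pathProd_pos {a : V → ℝ} (ha : ∀ w, w ≠ R.root → 0 < a w) (u : V) : 0 < R.pathProd a u :=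
  prod_pos fun k hk => ha _ <| R.ne_root_of_depth_pos <| by
    rw [R.depth_iterate_parent (mem_range.mp hk).le]; have := mem_range.mp hk; omega

variable [Fintype V]

/-- The vertices below `v`, i.e. those whose ancestor at the depth of `v` is `v`. -/
def subtree (v : V) : Finset V := {u | R.parent^[R.depth u - R.depth v] u = v}

def children (v : V) : Finset V := {w | w ≠ R.root ∧ R.parent w = v}

lemma mem_subtree {u v : V} : u ∈ R.subtree v ↔ R.parent^[R.depth u - R.depth v] u = v := by
  simp [subtree]

lemma mem_children {v w : V} : w ∈ R.children v ↔ w ≠ R.root ∧ R.parent w = v := by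
  simp [children]

lemma self_mem_subtree (v : V) : v ∈ R.subtree v := by simp [mem_subtree]

lemma depth_le_of_mem_subtree {u v : V} (h : u ∈ R.subtree v) : R.depth v ≤ R.depth u := by
  have := R.depth_iterate_parent (Nat.sub_le (R.depth u) (R.depth v))
  rw [R.mem_subtree.mp h] at this
  omega

lemma subtree_root : R.subtree R.root = univ := by
  ext u; simp [mem_subtree, iterate_parent_depth]

lemma root_notMem_subtree {v : V} (hv : v ≠ R.root) : R.root ∉ R.subtree v := by
  simpa [mem_subtree] using hv.symm

lemma depth_of_mem_children {v w : V} (hw : w ∈ R.children v) : R.depth w = R.depth v + 1 := by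
  obtain ⟨hr, rfl⟩ := R.mem_children.mp hw
  exact (R.depth_parent w hr).symm

lemma subtree_erase_eq_biUnion (v : V) :
    (R.subtree v).erase v = (R.children v).biUnion R.subtree := by
  ext u
  simp only [mem_erase, mem_biUnion]
  constructor
  · rintro ⟨huv, hu⟩
    have hle := R.depth_le_of_mem_subtree hu
    have hlt : R.depth v < R.depth u := by
      refine lt_of_le_of_ne hle fun h => huv ?_
      rw [← R.mem_subtree.mp hu, h, Nat.sub_self, Function.iterate_zero_apply]
    have hw := R.depth_iterate_parent (u := u) (k := R.depth u - R.depth v - 1) (by omega)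
    refine ⟨R.parent^[R.depth u - R.depth v - 1] u, R.mem_children.mpr ⟨?_, ?_⟩, ?_⟩
    · exact R.ne_root_of_depth_pos (by omega)
    · rw [← Function.iterate_succ_apply' R.parent, Nat.succ_eq_add_one,
        Nat.sub_add_cancel (by omega), R.mem_subtree.mp hu]
    · rw [R.mem_subtree, hw, show R.depth u - (R.depth u - (R.depth u - R.depth v - 1)) =
        R.depth u - R.depth v - 1 by omega]
  · rintro ⟨w, hw, hu⟩
    have hd := R.depth_of_mem_children hw
    have hle := R.depth_le_of_mem_subtree hu
    refine ⟨fun h => by subst h; omega, R.mem_subtree.mpr ?_⟩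
    rw [show R.depth u - R.depth v = (R.depth u - R.depth w) + 1 by omega,
      Function.iterate_succ_apply', R.mem_subtree.mp hu, (R.mem_children.mp hw).2]

lemma pairwiseDisjoint_subtree_children (v : V) :
    (R.children v : Set V).PairwiseDisjoint R.subtree := by
  intro w₁ hw₁ w₂ hw₂ hne
  refine Finset.disjoint_left.mpr fun u hu₁ hu₂ => hne ?_
  rw [← R.mem_subtree.mp hu₁, ← R.mem_subtree.mp hu₂, R.depth_of_mem_children hw₁,
    R.depth_of_mem_children hw₂]

lemma card_subtree (v : V) :
    #(R.subtree v) = 1 + ∑ w ∈ R.children v, #(R.subtree w) := by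
  rw [← card_biUnion (R.pairwiseDisjoint_subtree_children v), ← subtree_erase_eq_biUnion,
    card_erase_of_mem (R.self_mem_subtree v)]
  have := card_pos.mpr ⟨v, R.self_mem_subtree v⟩
  omega

lemma adjM_mulVec_apply (x : V → ℝ) (v : V) :
    (adjM T *ᵥ x) v = (if v = R.root then 0 else x (R.parent v)) + ∑ w ∈ R.children v, x w := by
  have hsplit (u : V) : adjM T v u * x u =
      (if v ≠ R.root ∧ R.parent v = u then x u else 0) +
        (if u ≠ R.root ∧ R.parent u = v then x u else 0) := by
    by_cases h₁ : v ≠ R.root ∧ R.parent v = u <;> by_cases h₂ : u ≠ R.root ∧ R.parent u = v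
    · have := R.depth_parent v h₁.1
      have := R.depth_parent u h₂.1
      rw [h₁.2] at *; rw [h₂.2] at *; omega
    all_goals simp [adjM, R.adj_iff, h₁, h₂]
  simp only [Matrix.mulVec, dotProduct, hsplit, sum_add_distrib, ite_and, children,
    sum_filter]
  congr 1
  by_cases hv : v = R.root <;> simp [hv]

lemma card_subtree_pos (v : V) : 0 < #(R.subtree v) := card_pos.mpr ⟨v, R.self_mem_subtree v⟩

lemma card_subtree_lt {v : V} (hv : v ≠ R.root) : #(R.subtree v) < Fintype.card V :=
  card_lt_univ_of_notMem (R.root_notMem_subtree hv)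

/-- For `P_n` rooted at an end this is, up to scaling, its Perron vector `(sin (k θ))ₖ`. -/
def testVector : V → ℝ := R.pathProd fun w => sinRatio (Fintype.card V) #(R.subtree w)

lemma testVector_pos (u : V) : 0 < R.testVector u :=
  R.pathProd_pos (fun w hw => sinRatio_pos (R.card_subtree_pos w) (R.card_subtree_lt hw)) u

lemma testVector_of_ne_root {u : V} (hu : u ≠ R.root) :
    R.testVector u = sinRatio (Fintype.card V) #(R.subtree u) * R.testVector (R.parent u) :=
  R.pathProd_of_ne_root _ hu

lemma two_cos_smul_testVector_le :
    (2 * cos (pathAngle (Fintype.card V))) • R.testVector ≤ adjM T *ᵥ R.testVector := by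
  intro v
  set n := Fintype.card V
  have hs := R.card_subtree_pos v
  have hsn : #(R.subtree v) ≤ n := card_le_univ _
  have hparent : (if v = R.root then 0 else R.testVector (R.parent v)) =
      (sinRatio n #(R.subtree v))⁻¹ * R.testVector v := by
    split_ifs with hv
    -- the root has no parent, and `1 / g n = sin ((n + 1) θ) / sin (n θ)` vanishes
    · rw [hv, R.subtree_root, card_univ, inv_sinRatio_self, zero_mul]
    · rw [R.testVector_of_ne_root hv, inv_mul_cancel_left₀
        (sinRatio_pos hs (R.card_subtree_lt hv)).ne']
  have hchildren : ∑ w ∈ R.children v, R.testVector w =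
      (∑ w ∈ R.children v, sinRatio n #(R.subtree w)) * R.testVector v := by
    rw [sum_mul]
    refine sum_congr rfl fun w hw => ?_
    obtain ⟨hr, rfl⟩ := R.mem_children.mp hw
    exact R.testVector_of_ne_root hr
  have hsuper :
      sinRatio n (#(R.subtree v) - 1) ≤ ∑ w ∈ R.children v, sinRatio n #(R.subtree w) := by
    have hsum : ∑ w ∈ R.children v, #(R.subtree w) = #(R.subtree v) - 1 := by
      rw [R.card_subtree v]; omega
    rw [← hsum]
    exact sinRatio_sum_le _ _ (by omega)
  have hrec := sinRatio_add_inv_sinRatio_succ (n := n) (k := #(R.subtree v) - 1) (by omega)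
  rw [Nat.sub_add_cancel hs] at hrec
  rw [Pi.smul_apply, smul_eq_mul, R.adjM_mulVec_apply, hparent, hchildren, ← hrec]
  nlinarith [R.testVector_pos v]

end Rooting

variable [Fintype V] {T : SimpleGraph V}

/-- Column sums of `A²` count walks `i - k - j`; as a tree has no triangles, distinct such walks
have distinct first edges `ik`. -/
lemma IsTree.sum_adjM_mul_adjM_le (hT : T.IsTree) (j : V) :
    ∑ i, (adjM T * adjM T) i j ≤ Fintype.card V - 1 := by
  set P := (univ ×ˢ univ).filter fun q : V × V => T.Adj q.1 q.2 ∧ T.Adj q.2 j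
  have hcount : ∑ i, (adjM T * adjM T) i j = #P := by
    rw [card_filter, sum_product]
    push_cast
    simp only [Matrix.mul_apply, adjM, ite_zero_mul_ite_zero, mul_one]
  have hinj : #P ≤ #T.edgeFinset := by
    refine card_le_card_of_injOn (fun q => s(q.1, q.2)) (fun q hq => ?_) fun q hq q' hq' h => ?_
    · simp only [P, coe_filter, Set.mem_ofPred_eq, mem_product, mem_univ, true_and] at hq
      simpa using hq.1
    · simp only [P, coe_filter, Set.mem_ofPred_eq, mem_product, mem_univ, true_and] at hq hq'
      rcases Sym2.eq_iff.mp h with ⟨h₁, h₂⟩ | ⟨h₁, h₂⟩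
      · exact Prod.ext h₁ h₂
      · refine absurd (is3Clique_triple_iff.mpr ⟨hq.1, ?_, hq.2⟩) (hT.isAcyclic.cliqueFree le_rfl _)
        simpa [h₁] using hq'.2
  have := hT.card_edgeFinset
  rw [hcount]
  have : (#P : ℝ) + 1 ≤ Fintype.card V := by exact_mod_cast (by omega : #P + 1 ≤ Fintype.card V)
  linarith

lemma IsTree.two_cos_pathAngle_le_specRad [DecidableEq V] (hT : T.IsTree) :
    2 * cos (pathAngle (Fintype.card V)) ≤ specRad T :=
  have ⟨R⟩ := hT.nonempty_rooting
  le_specRad_of_smul_le_mulVec T (fun u => (R.testVector_pos u).le)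
    (Function.ne_iff.mpr ⟨R.root, (R.testVector_pos _).ne'⟩) R.two_cos_smul_testVector_le

lemma IsTree.specRad_le_sqrt [DecidableEq V] (hT : T.IsTree) :
    specRad T ≤ √(Fintype.card V - 1) := by
  have : Nonempty V := hT.connected.nonempty
  refine specRad_le_of_forall_isRoot_le T fun t ht => ?_
  obtain ⟨v, hv, hvt⟩ := (isRoot_charP_iff T t).mp ht
  have hsq : (adjM T * adjM T) *ᵥ v = t ^ 2 • v := by
    rw [← Matrix.mulVec_mulVec, hvt, Matrix.mulVec_smul, hvt, smul_smul, sq]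
  have hnonneg (i j : V) : 0 ≤ (adjM T * adjM T) i j :=
    sum_nonneg fun k _ => mul_nonneg (adjM_nonneg T i k) (adjM_nonneg T k j)
  have hcol : (1 : V → ℝ) ᵥ* (adjM T * adjM T) ≤ ((Fintype.card V : ℝ) - 1) • 1 := fun j => by
    simpa [Matrix.vecMul, dotProduct] using hT.sum_adjM_mul_adjM_le j
  have := abs_le_of_mulVec_eq_smul hnonneg (fun _ => one_pos) hcol hv hsq
  exact (le_abs_self t).trans (Real.abs_le_sqrt (by simpa using this))

end SimpleGraph

open Real in
/-- `ρ(P_n) = 2 cos(π/(n+1))`, and every tree `T` on `n` vertices satisfies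
`2 cos(π/(n+1)) ≤ ρ(T) ≤ √(n-1)`, the upper bound being attained by the star
`K_{1,n-1}`. -/
theorem tree_spectral_radius_bounds (n : ℕ) (hn : 1 ≤ n) :
    specRad (SimpleGraph.pathGraph n) = 2 * Real.cos (π / (n + 1)) ∧
    (∀ T : SimpleGraph (Fin n), T.IsTree →
      2 * Real.cos (π / (n + 1)) ≤ specRad T ∧
        specRad T ≤ Real.sqrt ((n : ℝ) - 1)) ∧
    specRad (completeBipartiteGraph (Fin 1) (Fin (n - 1))) = Real.sqrt ((n : ℝ) - 1) := by
  refine ⟨specRad_pathGraph hn, fun T hT => ⟨?_, ?_⟩, ?_⟩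
  · simpa [pathAngle] using hT.two_cos_pathAngle_le_specRad
  · simpa using hT.specRad_le_sqrt
  · rw [specRad_completeBipartiteGraph_fin_one, Nat.cast_sub hn, Nat.cast_one]
end
end
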